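/- arXiv:1509.08821 — 2 statements merged into one kernel-verified Lean document; each statement's English description precedes it below -/
import Mathlib

section
/- Let S ⊆ ℕ be a symmetric cofinite set with 0 ∈ S and genus δ = δ_S. Let a_1 < a_2 < … < a_d be the elements of the image of the function n ↦ Γ_S(n) − n, and set a'_k = δ − a_{d+1−k} for k = 1, …, d. Then Γ_S(a'_k) − a'_k = a_k for every k = 1, …, d. -/
/-! Let `E x` and `G x` count the elements and the gaps of `S` below `x`, so that
`Γ n - n = G (Γ n)`. Symmetry about `δ - 1/2` gives `E x + G (2δ - x) = δ` for `x ≤ 2δ`. If `s ∈ S`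
starts a run of `S`, symmetry puts `2δ - s` in `S`, and the identity then yields
`Γ (δ - G s) - (δ - G s) = δ - E s`. Every value of `n ↦ Γ n - n` is `G s` for such a run start `s`,
and run starts with more gaps below them have more elements below them, so
`v ↦ Γ (δ - v) - (δ - v)` is a strictly decreasing self-map of the finite image: it reverses the
enumeration `a`. -/

/-- The enumerating function of a set `S ⊆ ℕ`: `enumFun S n` is the `(n+1)`-st smallest
element of `S` (0-indexed `n`-th element). -/
noncomputable def enumFun (S : Set ℕ) : ℕ → ℕ := Nat.nth (· ∈ S)

/-- The genus of a cofinite set `S ⊆ ℕ`: the number of gaps `#(ℕ \ S)`. -/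
noncomputable def genus (S : Set ℕ) : ℕ := Sᶜ.ncard

/-- A cofinite set `S ⊆ ℕ` is symmetric if for every `x` with `0 ≤ x ≤ 2δ_S − 1`,
`x ∈ S ↔ 2δ_S − 1 − x ∉ S`. -/
noncomputable def IsSymmetricSet (S : Set ℕ) : Prop :=
  ∀ x : ℕ, x ≤ 2 * genus S - 1 → (x ∈ S ↔ (2 * genus S - 1 - x) ∉ S)

namespace Nat

variable {p : ℕ → Prop} [DecidablePred p]

theorem count_add_count_not (n : ℕ) : count p n + count (fun x => ¬p x) n = n := by
  induction n with
  | zero => simp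
  | succ n ih => grind

theorem count_not_add_count_sub_of_reflect {N : ℕ} (hp : ∀ x < N, p (N - 1 - x) ↔ ¬p x)
    {j : ℕ} (hj : j ≤ N) : count (fun x => ¬p x) j + count p (N - j) = count p N := by
  induction j with
  | zero => simp
  | succ j ih =>
    have hrefl := hp j (by omega)
    rw [show N - 1 - j = N - (j + 1) by omega] at hrefl
    rw [← ih (by omega), show N - j = N - (j + 1) + 1 by omega, count_succ, count_succ]
    grind

end Nat

theorem StrictAntiOn.apply_rev_eq {α : Type*} [LinearOrder α] {s : Set α} {f : α → α}
    {a : ℕ → α} {d : ℕ} (hf : StrictAntiOn f s) (hfs : Set.MapsTo f s s)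
    (ha : StrictMonoOn a (Set.Icc 1 d)) (has : a '' Set.Icc 1 d = s) {k : ℕ} (hk1 : 1 ≤ k)
    (hkd : k ≤ d) : f (a (d + 1 - k)) = a k := by
  have hfin : s.Finite := has ▸ (Set.finite_Icc 1 d).image a
  have hcard : hfin.toFinset.card = d := by
    rw [← Set.ncard_eq_toFinset_card _ hfin, ← has, ha.injOn.ncard_image,
      ← Finset.coe_Icc, Set.ncard_coe_finset, Nat.card_Icc, Nat.add_sub_cancel]
  have ha_mem : ∀ j, 1 ≤ j → j ≤ d → a j ∈ s := fun j h1 h2 => has ▸ ⟨j, ⟨h1, h2⟩, rfl⟩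
  have hup := Finset.orderEmbOfFin_unique hcard (f := fun i => a (i + 1))
    (fun i => hfin.mem_toFinset.2 (ha_mem _ (by omega) (by omega))) fun i j hij =>
      ha ⟨by omega, by omega⟩ ⟨by omega, by omega⟩ (by have := Fin.lt_def.1 hij; omega)
  have hdown := Finset.orderEmbOfFin_unique hcard (f := fun i => f (a (d - i)))
    (fun i => hfin.mem_toFinset.2 (hfs (ha_mem _ (by omega) (by omega)))) fun i j hij =>
      hf (ha_mem _ (by omega) (by omega)) (ha_mem _ (by omega) (by omega))
        (ha ⟨by omega, by omega⟩ ⟨by omega, by omega⟩ (by have := Fin.lt_def.1 hij; omega))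
  have := congrFun (hdown.trans hup.symm) ⟨k - 1, by omega⟩
  simpa [show d - (k - 1) = d + 1 - k by omega, Nat.sub_add_cancel hk1] using this

section Gaps

open Classical Nat

variable {S : Set ℕ}

theorem enumFun_mem (hS : Sᶜ.Finite) (m : ℕ) : enumFun S m ∈ S :=
  nth_mem_of_infinite (by simpa using hS.infinite_compl) m

theorem enumFun_sub_self (hS : Sᶜ.Finite) (m : ℕ) :
    enumFun S m - m = count (· ∉ S) (enumFun S m) := by
  have := count_add_count_not (p := (· ∈ S)) (enumFun S m)
  rw [enumFun, count_nth_of_infinite (by simpa using hS.infinite_compl)] at *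
  omega

theorem count_notMem_le_genus (hS : Sᶜ.Finite) (n : ℕ) : count (· ∉ S) n ≤ genus S :=
  (count_le_card hS n).trans_eq (Set.ncard_eq_toFinset_card _ hS).symm

theorem count_notMem_lt_genus (hS : Sᶜ.Finite) {x : ℕ} (hx : x ∉ S) :
    count (· ∉ S) x < genus S :=
  (count_lt_card hS hx).trans_eq (Set.ncard_eq_toFinset_card _ hS).symm

theorem exists_runStart_count_notMem_eq {s : ℕ} (hs : s ∈ S) :
    ∃ t ∈ S, (t = 0 ∨ t - 1 ∉ S) ∧ count (· ∉ S) t = count (· ∉ S) s := by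
  induction s with
  | zero => exact ⟨0, hs, .inl rfl, rfl⟩
  | succ n ih =>
    by_cases hn : n ∈ S
    · obtain ⟨t, ht, hrun, hcount⟩ := ih hn
      exact ⟨t, ht, hrun, by rw [hcount, count_succ, if_neg (not_not.2 hn), add_zero]⟩
    · exact ⟨n + 1, hs, .inr hn, rfl⟩

namespace IsSymmetricSet

theorem count_notMem_add_count_mem_sub (hsym : IsSymmetricSet S) {j : ℕ}
    (hj : j ≤ 2 * genus S) :
    count (· ∉ S) j + count (· ∈ S) (2 * genus S - j) = count (· ∈ S) (2 * genus S) :=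
  count_not_add_count_sub_of_reflect (fun x hx => by have := hsym x (by omega); tauto) hj

theorem count_mem_two_mul_genus (hsym : IsSymmetricSet S) :
    count (· ∈ S) (2 * genus S) = genus S := by
  have := hsym.count_notMem_add_count_mem_sub le_rfl
  have := count_add_count_not (p := (· ∈ S)) (2 * genus S)
  simp_all only [Nat.sub_self, count_zero]
  omega

theorem count_mem_add_count_notMem_sub (hsym : IsSymmetricSet S) {x : ℕ}
    (hx : x ≤ 2 * genus S) :
    count (· ∈ S) x + count (· ∉ S) (2 * genus S - x) = genus S := by
  have := hsym.count_notMem_add_count_mem_sub (Nat.sub_le (2 * genus S) x)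
  rw [Nat.sub_sub_self hx, hsym.count_mem_two_mul_genus] at this
  omega

theorem lt_two_mul_genus_of_notMem (hsym : IsSymmetricSet S) (hS : Sᶜ.Finite) {x : ℕ}
    (hx : x ∉ S) : x < 2 * genus S := by
  by_contra! h
  have := count_monotone (· ∉ S) h
  have := count_add_count_not (p := (· ∈ S)) (2 * genus S)
  have := count_notMem_lt_genus hS hx
  have := hsym.count_mem_two_mul_genus
  omega

theorem le_two_mul_genus_of_runStart (hsym : IsSymmetricSet S) (hS : Sᶜ.Finite) {s : ℕ}
    (hrun : s = 0 ∨ s - 1 ∉ S) : s ≤ 2 * genus S := by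
  rcases hrun with rfl | h
  · exact Nat.zero_le _
  · have := hsym.lt_two_mul_genus_of_notMem hS h
    omega

theorem enumFun_genus_sub_count_notMem (hsym : IsSymmetricSet S) (hS : Sᶜ.Finite) {s : ℕ}
    (hs : s ∈ S) (hrun : s = 0 ∨ s - 1 ∉ S) :
    enumFun S (genus S - count (· ∉ S) s) - (genus S - count (· ∉ S) s) =
      genus S - count (· ∈ S) s := by
  have hs2 := hsym.le_two_mul_genus_of_runStart hS hrun
  have hmem : 2 * genus S - s ∈ S := by
    rcases hrun with rfl | h
    · by_contra h
      exact (hsym.lt_two_mul_genus_of_notMem hS h).ne rfl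
    · have hs0 : s ≠ 0 := by rintro rfl; exact h hs
      have := hsym (s - 1) (by omega)
      rw [show 2 * genus S - 1 - (s - 1) = 2 * genus S - s by omega] at this
      tauto
  have hcount := hsym.count_mem_add_count_notMem_sub (Nat.sub_le (2 * genus S) s)
  rw [Nat.sub_sub_self hs2] at hcount
  rw [show genus S - count (· ∉ S) s = count (· ∈ S) (2 * genus S - s) by omega, enumFun,
    nth_count hmem]
  have := count_add_count_not (p := (· ∈ S)) s
  have := count_notMem_le_genus hS s
  omega

theorem strictAntiOn_enumFun_genus_sub (hsym : IsSymmetricSet S) (hS : Sᶜ.Finite) :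
    StrictAntiOn (fun v => enumFun S (genus S - v) - (genus S - v))
      (Set.range fun n => enumFun S n - n) := by
  rintro _ ⟨m, rfl⟩ _ ⟨n, rfl⟩ hmn
  obtain ⟨s, hs, hrun_s, hcount_s⟩ := exists_runStart_count_notMem_eq (enumFun_mem hS m)
  obtain ⟨t, ht, hrun_t, hcount_t⟩ := exists_runStart_count_notMem_eq (enumFun_mem hS n)
  dsimp only at hmn ⊢
  rw [enumFun_sub_self hS m, enumFun_sub_self hS n, ← hcount_s, ← hcount_t] at hmn ⊢
  rw [hsym.enumFun_genus_sub_count_notMem hS hs hrun_s,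
    hsym.enumFun_genus_sub_count_notMem hS ht hrun_t]
  have hst := count_strict_mono (p := (· ∈ S)) hs (lt_of_count_lt_count hmn)
  have := count_monotone (· ∈ S) (hsym.le_two_mul_genus_of_runStart hS hrun_t)
  have := hsym.count_mem_two_mul_genus
  omega

end IsSymmetricSet

end Gaps

theorem stmt3_general (S : Set ℕ) (hS : Sᶜ.Finite) (hsym : IsSymmetricSet S)
    (d : ℕ) (a : ℕ → ℕ) (hmono : StrictMonoOn a (Set.Icc 1 d))
    (himg : a '' Set.Icc 1 d = Set.range (fun n => enumFun S n - n)) :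
    ∀ k : ℕ, 1 ≤ k → k ≤ d →
      enumFun S (genus S - a (d + 1 - k)) - (genus S - a (d + 1 - k)) = a k := fun _ hk1 hkd =>
  (hsym.strictAntiOn_enumFun_genus_sub hS).apply_rev_eq (fun _ _ => ⟨_, rfl⟩) hmono himg hk1 hkd

/-- Let `a 1 < a 2 < ⋯ < a d` enumerate the image of `n ↦ Γ_S(n) − n` and let
`a'_k = δ_S − a (d+1−k)`. Then `Γ_S(a'_k) − a'_k = a k` for all `1 ≤ k ≤ d`. -/
theorem stmt3 (S : Set ℕ) (hS : Sᶜ.Finite) (h0 : 0 ∈ S) (hsym : IsSymmetricSet S)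
    (d : ℕ) (a : ℕ → ℕ) (hmono : StrictMonoOn a (Set.Icc 1 d))
    (himg : a '' Set.Icc 1 d = Set.range (fun n => enumFun S n - n)) :
    ∀ k : ℕ, 1 ≤ k → k ≤ d →
      enumFun S (genus S - a (d + 1 - k)) - (genus S - a (d + 1 - k)) = a k :=
  stmt3_general S hS hsym d a hmono himg
end

section
/- Let q, r, p be integers with 2 ≤ q < r, gcd(q, r) = 1, p ≥ 2qr − 1, gcd(p, 2qr) = 1, and gcd(p+2, 2qr) = 1. Let δ_T = #(ℕ \ ⟨q, r⟩) and let S = ⟨q(p+2), rp⟩ ⊆ ℕ. Then S is cofinite and its enumerating function satisfies Γ_S(δ_T + q − 1) = (q−1)rp and Γ_S(δ_T + r − 1) = (r−1)q(p+2). -/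
/-!
Every element of `⟨a, b⟩` (`a`, `b` coprime) below `a b` is uniquely `i a + j b` with `j < a`,
so counting column by column gives `#(⟨a, b⟩ ∩ [0, c b)) = ∑_{0 < k ≤ c} ⌈k b / a⌉` for `c ≤ a`.
With `c = a`, and pairing `k` with `a - k` in `∑_{0 < k < a} ⌊k b / a⌋ = (a - 1)(b - 1) / 2`,
this gives Sylvester's count `δ_T = (q - 1)(r - 1) / 2`. For `S = ⟨q(p+2), rp⟩` with
`p ≥ 2qr - 1`, `rp / (q(p+2))` is so close to `r / q` that `⌈k rp / (q(p+2))⌉ = ⌊k r / q⌋ + 1`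
for `0 < k < q`, and symmetrically for `q(p+2) / (rp)`. Hence exactly `δ_T + q - 1`, resp.
`δ_T + r - 1`, elements of `S` lie below `(q - 1) rp`, resp. `(r - 1) q(p+2)`.
-/

/-- The numerical semigroup `⟨x, y⟩ = {i·x + j·y : i, j ∈ ℕ}` as a subset of `ℕ`. -/
def gen2 (x y : ℕ) : Set ℕ := {n | ∃ i j : ℕ, n = i * x + j * y}

open Finset

lemma gen2_comm (a b : ℕ) : gen2 a b = gen2 b a := by
  ext n; constructor <;> rintro ⟨i, j, rfl⟩ <;> exact ⟨j, i, by ring⟩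

noncomputable instance (a b : ℕ) : DecidablePred (· ∈ gen2 a b) := Classical.decPred _

lemma mem_gen2_iff_mem_closure {a b m : ℕ} :
    m ∈ gen2 a b ↔ m ∈ AddSubmonoid.closure ({a, b} : Set ℕ) := by
  simp only [AddSubmonoid.mem_closure_pair, smul_eq_mul, gen2, Set.mem_ofPred_eq, eq_comm]

lemma compl_gen2_subset_Iio {a b : ℕ} (hab : a.Coprime b) (ha : 1 < a) (hb : 1 < b) :
    (gen2 a b)ᶜ ⊆ Set.Iio (a * b) := by
  intro m hm
  by_contra hlt
  refine hm (mem_gen2_iff_mem_closure.2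
    ((frobeniusNumber_iff.1 (frobeniusNumber_pair hab ha hb)).2 m ?_))
  simp only [Set.mem_Iio, not_lt] at hlt
  have : 0 < a * b := Nat.mul_pos (by omega) (by omega)
  omega

lemma eq_of_mul_add_mul_eq {a b i₁ j₁ i₂ j₂ : ℕ} (hab : a.Coprime b) (hj₁ : j₁ < a)
    (hj₂ : j₂ < a) (h : i₁ * a + j₁ * b = i₂ * a + j₂ * b) : i₁ = i₂ ∧ j₁ = j₂ := by
  have hmod : j₁ * b ≡ j₂ * b [MOD a] := by
    simpa only [Nat.ModEq, add_comm (_ * a), Nat.add_mul_mod_self_right]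
      using congrArg (· % a) h
  have hj : j₁ = j₂ := (hmod.cancel_right_of_coprime hab).eq_of_lt_of_lt hj₁ hj₂
  subst hj
  exact ⟨Nat.eq_of_mul_eq_mul_right (by omega) (Nat.add_right_cancel h), rfl⟩

lemma lt_ceilDiv_iff_mul_lt {a x i : ℕ} (ha : 0 < a) : i < x ⌈/⌉ a ↔ i * a < x := by
  rw [← not_le, ceilDiv_le_iff_le_mul ha, not_le, mul_comm]

lemma ceilDiv_eq_add_one {a x d : ℕ} (h₁ : d * a < x) (h₂ : x ≤ (d + 1) * a) :
    x ⌈/⌉ a = d + 1 := by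
  have ha : 0 < a := by rcases Nat.eq_zero_or_pos a with rfl | ha <;> simp_all
  refine le_antisymm ((ceilDiv_le_iff_le_mul ha).2 (by linarith)) ?_
  exact Nat.succ_le_of_lt ((lt_ceilDiv_iff_mul_lt ha).2 h₁)

lemma ceilDiv_eq_div_add_one {a x : ℕ} (ha : 0 < a) (hx : ¬ a ∣ x) : x ⌈/⌉ a = x / a + 1 :=
  ceilDiv_eq_add_one
    (lt_of_le_of_ne (Nat.div_mul_le_self x a) fun h => hx ⟨x / a, by rw [mul_comm, h]⟩)
    (by rw [add_one_mul]; exact (Nat.lt_div_mul_add ha).le)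

lemma count_gen2_mul {a b c : ℕ} (hab : a.Coprime b) (ha : 0 < a) (hc : c ≤ a) :
    Nat.count (· ∈ gen2 a b) (c * b) = ∑ k ∈ Ioc 0 c, k * b ⌈/⌉ a := by
  have hsplit : ∀ k ≤ c, (c - k) * b + k * b = c * b := fun k hk => by
    rw [← add_mul, Nat.sub_add_cancel hk]
  have hfilter : {m ∈ range (c * b) | m ∈ gen2 a b} =
      (Ioc 0 c).biUnion fun k =>
        (range (k * b ⌈/⌉ a)).image fun i => i * a + (c - k) * b := by
    ext m
    simp only [mem_filter, mem_range, mem_biUnion, mem_Ioc, mem_image, lt_ceilDiv_iff_mul_lt ha]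
    constructor
    · rintro ⟨hm, i, j, rfl⟩
      have hj : j < c := Nat.lt_of_mul_lt_mul_right (a := b) (by omega)
      have := hsplit (c - j) (by omega)
      refine ⟨c - j, by omega, i, ?_, by rw [Nat.sub_sub_self hj.le]⟩
      rw [Nat.sub_sub_self hj.le] at this
      omega
    · rintro ⟨k, hk, i, hi, rfl⟩
      have := hsplit k hk.2
      exact ⟨by omega, i, c - k, rfl⟩
  have hdisj : (Ioc 0 c : Set ℕ).PairwiseDisjoint
      fun k => (range (k * b ⌈/⌉ a)).image fun i => i * a + (c - k) * b := by
    intro k₁ hk₁ k₂ hk₂ hne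
    simp only [coe_Ioc, Set.mem_Ioc] at hk₁ hk₂
    simp only [Function.onFun, disjoint_left, mem_image]
    rintro _ ⟨i₁, -, rfl⟩ ⟨i₂, -, h⟩
    have := (eq_of_mul_add_mul_eq hab (j₁ := c - k₂) (j₂ := c - k₁) (by omega) (by omega) h).2
    omega
  rw [Nat.count_eq_card_filter_range, hfilter, card_biUnion hdisj]
  refine sum_congr rfl fun k _ => ?_
  rw [card_image_of_injective _ fun i₁ i₂ h =>
    Nat.eq_of_mul_eq_mul_right ha (Nat.add_right_cancel h), card_range]

lemma enumFun_gen2_sum_ceilDiv {a b c : ℕ} (hab : a.Coprime b) (ha : 0 < a) (hc : c ≤ a) :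
    enumFun (gen2 a b) (∑ k ∈ Ioc 0 c, k * b ⌈/⌉ a) = c * b := by
  rw [← count_gen2_mul hab ha hc]
  exact Nat.nth_count ⟨0, c, by ring⟩

lemma div_add_div_of_add_eq_mul {a b x y : ℕ} (hx : ¬ a ∣ x) (h : x + y = a * b) :
    x / a + y / a = b - 1 := by
  have ha : 0 < a := Nat.pos_of_ne_zero (by rintro rfl; simp_all)
  have hxa := Nat.div_add_mod x a
  have hs : 0 < x % a := Nat.pos_of_ne_zero fun h => hx (Nat.dvd_of_mod_eq_zero h)
  have hs' := Nat.mod_lt x ha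
  have hb : x / a < b := Nat.lt_of_mul_lt_mul_left (a := a) (by omega)
  obtain ⟨e, rfl⟩ : ∃ e, b = x / a + 1 + e := ⟨b - (x / a + 1), by omega⟩
  have h' : x + y = a * (x / a) + a + a * e := by rw [h]; ring
  have hy : y / a = e := Nat.div_eq_of_lt_le (by rw [mul_comm]; omega)
    (by rw [add_one_mul, mul_comm]; omega)
  rw [hy, add_right_comm, Nat.add_sub_cancel]

lemma not_dvd_mul_of_coprime {a b k : ℕ} (hab : a.Coprime b) (hk : k ∈ Ioo 0 a) :
    ¬ a ∣ k * b := fun h => by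
  have := Nat.le_of_dvd (mem_Ioo.1 hk).1 (hab.dvd_of_dvd_mul_right h)
  have := (mem_Ioo.1 hk).2
  omega

lemma two_mul_sum_div {a b : ℕ} (hab : a.Coprime b) :
    2 * ∑ k ∈ Ioo 0 a, k * b / a = (a - 1) * (b - 1) := by
  have hreflect : ∑ k ∈ Ioo 0 a, k * b / a = ∑ k ∈ Ioo 0 a, (a - k) * b / a :=
    sum_nbij' (a - ·) (a - ·) (by simp; omega) (by simp; omega) (by simp; omega)
      (by simp; omega) fun k hk => by rw [Nat.sub_sub_self (mem_Ioo.1 hk).2.le]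
  calc 2 * ∑ k ∈ Ioo 0 a, k * b / a
      = ∑ k ∈ Ioo 0 a, (k * b / a + (a - k) * b / a) := by
        rw [two_mul, sum_add_distrib, ← hreflect]
    _ = ∑ _k ∈ Ioo 0 a, (b - 1) := sum_congr rfl fun k hk => by
        refine div_add_div_of_add_eq_mul (not_dvd_mul_of_coprime hab hk) ?_
        rw [← add_mul, Nat.add_sub_cancel' (mem_Ioo.1 hk).2.le]
    _ = (a - 1) * (b - 1) := by rw [sum_const, Nat.card_Ioo, smul_eq_mul, Nat.sub_zero]

lemma sum_Ioo_div_eq {a b : ℕ} (hab : a.Coprime b) :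
    ∑ k ∈ Ioo 0 a, k * b / a = (a - 1) * (b - 1) / 2 := by
  have := two_mul_sum_div hab
  omega

lemma sum_Ioc_sub_one_eq_sum_div_add {a b : ℕ} {f : ℕ → ℕ}
    (hf : ∀ k ∈ Ioo 0 a, f k = k * b / a + 1) :
    ∑ k ∈ Ioc 0 (a - 1), f k = ∑ k ∈ Ioo 0 a, k * b / a + (a - 1) := by
  rw [Ioc_sub_one_right_eq_Ioo, sum_congr rfl hf, sum_add_distrib, sum_const, Nat.card_Ioo,
    smul_eq_mul, mul_one, Nat.sub_zero]

lemma ncard_compl_eq_sub_count {s : Set ℕ} [DecidablePred (· ∈ s)] {N : ℕ}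
    (h : sᶜ ⊆ Set.Iio N) : sᶜ.ncard = N - Nat.count (· ∈ s) N := by
  have hs : sᶜ = ↑{m ∈ range N | m ∉ s} := by
    ext m
    simp only [Set.mem_compl_iff, coe_filter, mem_range, Set.mem_ofPred_eq]
    exact ⟨fun hm => ⟨h hm, hm⟩, And.right⟩
  have hsplit := card_filter_add_card_filter_not (s := range N) (· ∈ s)
  rw [card_range] at hsplit
  rw [hs, Set.ncard_coe_finset, Nat.count_eq_card_filter_range]
  omega

lemma ncard_compl_gen2 {a b : ℕ} (hab : a.Coprime b) (ha : 1 < a) (hb : 1 < b) :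
    ((gen2 a b)ᶜ).ncard = (a - 1) * (b - 1) / 2 := by
  have hcount :
      Nat.count (· ∈ gen2 a b) (a * b) = ∑ k ∈ Ioo 0 a, k * b / a + (a - 1) + b := by
    rw [count_gen2_mul hab (by omega) le_rfl,
      ← insert_Ioc_sub_one_right_eq_Ioc (by omega : 0 < a),
      sum_insert (by simp), ← smul_eq_mul, smul_ceilDiv (by omega : 0 < a), add_comm,
      sum_Ioc_sub_one_eq_sum_div_add fun k hk =>
        ceilDiv_eq_div_add_one (by omega) (not_dvd_mul_of_coprime hab hk)]
  have hab' : a * b = (a - 1) * (b - 1) + (a - 1) + b := by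
    obtain ⟨a, rfl⟩ : ∃ a', a = a' + 1 := ⟨a - 1, by omega⟩
    obtain ⟨b, rfl⟩ : ∃ b', b = b' + 1 := ⟨b - 1, by omega⟩
    simp only [Nat.add_sub_cancel]; ring
  rw [ncard_compl_eq_sub_count (compl_gen2_subset_Iio hab ha hb), hcount]
  have := two_mul_sum_div hab
  omega

lemma ceilDiv_mul_mul_add_two {x y p : ℕ} (hy : 0 < y) (hx : ¬ y ∣ x) (hp : 2 * x < p) :
    x * p ⌈/⌉ (y * (p + 2)) = x / y + 1 := by
  have hxy := Nat.div_add_mod x y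
  have hs : 0 < x % y := Nat.pos_of_ne_zero fun h => hx (Nat.dvd_of_mod_eq_zero h)
  have hs' := Nat.mod_lt x hy
  refine ceilDiv_eq_add_one ?_ ?_
  · nlinarith
  · nlinarith

lemma ceilDiv_mul_add_two_mul {x y p : ℕ} (hy : 0 < y) (hx : 0 < x) (hp : 2 * x ≤ p) :
    x * (p + 2) ⌈/⌉ (y * p) = x / y + 1 := by
  have hxy := Nat.div_add_mod x y
  have hs' := Nat.mod_lt x hy
  refine ceilDiv_eq_add_one ?_ ?_
  · have := Nat.mul_le_mul_right p (Nat.div_mul_le_self x y)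
    nlinarith
  · nlinarith

lemma coprime_mul_add_two_mul {q r p : ℕ} (hqr : q.Coprime r) (hp : p.Coprime (2 * q * r))
    (hp₂ : (p + 2).Coprime (2 * q * r)) : (q * (p + 2)).Coprime (r * p) := by
  obtain ⟨hp2, hpq, -⟩ : p.Coprime 2 ∧ p.Coprime q ∧ p.Coprime r := by
    simpa only [Nat.coprime_mul_iff_right, and_assoc] using hp
  have hp₂r : (p + 2).Coprime r := Nat.coprime_mul_iff_right.1 hp₂ |>.2
  have hp₂p : (p + 2).Coprime p := Nat.coprime_self_add_left.2 hp2.symm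
  exact (hqr.mul_right hpq.symm).mul_left (hp₂r.mul_right hp₂p)

lemma sum_Ioc_ceilDiv_mul_mul_add_two {q r p : ℕ} (hr : 0 < r) (hqr : q.Coprime r)
    (hp : 2 * (q * r) ≤ p + 1) :
    ∑ k ∈ Ioc 0 (q - 1), k * (r * p) ⌈/⌉ (q * (p + 2))
      = (q - 1) * (r - 1) / 2 + (q - 1) := by
  rw [sum_Ioc_sub_one_eq_sum_div_add fun k hk => ?_, sum_Ioo_div_eq hqr]
  have hkq : (k + 1) * r ≤ q * r := Nat.mul_le_mul_right r (mem_Ioo.1 hk).2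
  rw [add_one_mul] at hkq
  rw [← mul_assoc]
  exact ceilDiv_mul_mul_add_two (by have := (mem_Ioo.1 hk).2; omega)
    (not_dvd_mul_of_coprime hqr hk) (by omega)

lemma sum_Ioc_ceilDiv_mul_add_two_mul {q r p : ℕ} (hq : 0 < q) (hqr : q.Coprime r)
    (hp : 2 * (q * r) ≤ p + 1) :
    ∑ k ∈ Ioc 0 (r - 1), k * (q * (p + 2)) ⌈/⌉ (r * p)
      = (q - 1) * (r - 1) / 2 + (r - 1) := by
  rw [sum_Ioc_sub_one_eq_sum_div_add fun k hk => ?_, sum_Ioo_div_eq hqr.symm, mul_comm (r - 1)]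
  have hkr : (k + 1) * q ≤ r * q := Nat.mul_le_mul_right q (mem_Ioo.1 hk).2
  rw [add_one_mul, mul_comm r] at hkr
  rw [← mul_assoc]
  exact ceilDiv_mul_add_two_mul (by have := (mem_Ioo.1 hk).2; omega)
    (Nat.mul_pos (mem_Ioo.1 hk).1 hq) (by omega)

/-- For `2 ≤ q < r` coprime, `p ≥ 2qr − 1` with `gcd(p, 2qr) = gcd(p+2, 2qr) = 1`,
`δ_T = #(ℕ \ ⟨q,r⟩)` and `S = ⟨q(p+2), rp⟩`: `S` is cofinite,
`Γ_S(δ_T + q − 1) = (q−1)rp` and `Γ_S(δ_T + r − 1) = (r−1)q(p+2)`. -/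
theorem stmt11 (q r p : ℕ) (hq : 2 ≤ q) (hqr : q < r) (hcop : Nat.gcd q r = 1)
    (hp : 2 * q * r - 1 ≤ p) (hp1 : Nat.gcd p (2 * q * r) = 1)
    (hp2 : Nat.gcd (p + 2) (2 * q * r) = 1) :
    ((gen2 (q * (p + 2)) (r * p))ᶜ).Finite ∧
    enumFun (gen2 (q * (p + 2)) (r * p)) (((gen2 q r)ᶜ).ncard + q - 1)
      = (q - 1) * (r * p) ∧
    enumFun (gen2 (q * (p + 2)) (r * p)) (((gen2 q r)ᶜ).ncard + r - 1)
      = (r - 1) * (q * (p + 2)) := by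
  rw [mul_assoc] at hp
  have hp' : 2 * (q * r) ≤ p + 1 := by omega
  have hp0 : 0 < p := by have := Nat.mul_pos (by omega : 0 < q) (by omega : 0 < r); omega
  have hcopS := coprime_mul_add_two_mul hcop hp1 hp2
  have hδ := ncard_compl_gen2 hcop (by omega) (by omega)
  have hA : 1 < q * (p + 2) := by nlinarith
  have hB : 1 < r * p := by nlinarith
  refine ⟨(Set.finite_Iio _).subset (compl_gen2_subset_Iio hcopS hA hB), ?_, ?_⟩
  · rw [hδ, Nat.add_sub_assoc (by omega : 1 ≤ q),
      ← sum_Ioc_ceilDiv_mul_mul_add_two (by omega) hcop hp',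
      enumFun_gen2_sum_ceilDiv hcopS (by omega)
        ((Nat.sub_le q 1).trans (Nat.le_mul_of_pos_right q (by omega)))]
  · rw [hδ, Nat.add_sub_assoc (by omega : 1 ≤ r),
      ← sum_Ioc_ceilDiv_mul_add_two_mul (by omega) hcop hp', gen2_comm,
      enumFun_gen2_sum_ceilDiv hcopS.symm (by omega)
        ((Nat.sub_le r 1).trans (Nat.le_mul_of_pos_right r hp0))]
end
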